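/- Discrete variational characterization of the Maxwell equations: let V be a finite type and let w : V → V → V → ℝ be a weight function that is invariant under all permutations of its three arguments. For an antisymmetric discrete 1-form A : V → V → ℝ (A(u,v) = −A(v,u) for all u, v), define dA(u,v,x) = A(v,x) − A(u,x) + A(u,v) and the discrete action S(A) = (1/12) Σ_{u ∈ V} Σ_{v ∈ V} Σ_{x ∈ V} w(u,v,x) (dA(u,v,x))². Then for every antisymmetric A and every pair of distinct vertices a, b ∈ V, the derivative at ε = 0 of the function ε ↦ S(A + ε η_{ab}) equals Σ_{x ∈ V} w(a,b,x) dA(a,b,x), where η_{ab} is the elementary antisymmetric 1-form with η_{ab}(a,b) = 1, η_{ab}(b,a) = −1, and value 0 on all other pairs. Consequently, A is a critical point of S (all such directional derivatives vanish) if and only if Σ_{x ∈ V} w(a,b,x) dA(a,b,x) = 0 for every pair of distinct vertices a, b, which is the discrete Maxwell equation ∗d∗dA = 0 in weighted-cochain form. -/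

import Mathlib

/-!
Perturbing `A` by `ε η_{ab}` changes `S` by a quadratic in `ε` whose linear coefficient is
`(1/6) ∑ w · dA · dη_{ab}`. The weighted coboundary `F = w · dA` is alternating, so pairing it with
a coboundary `dB` gives three copies of its pairing with `B` (the discrete adjointness `⟨F, dB⟩ =
3 ⟨d^*F, B⟩`); against `η_{ab}` this is `∑ₓ F(a,b,x) − ∑ₓ F(b,a,x) = 2 ∑ₓ F(a,b,x)`.
-/

section Cochains

variable {V R : Type*} [CommRing R]

def coboundary (A : V → V → R) (u v x : V) : R := A v x - A u x + A u v

theorem coboundary_add_mul (A B : V → V → R) (ε : R) (u v x : V) :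
    coboundary (fun u v => A u v + ε * B u v) u v x =
      coboundary A u v x + ε * coboundary B u v x := by
  simp only [coboundary]
  ring

structure IsAlternating (F : V → V → V → R) : Prop where
  swap_left : ∀ u v x, F v u x = -F u v x
  swap_right : ∀ u v x, F u x v = -F u v x

theorem isAlternating_coboundary {A : V → V → R} (hA : ∀ u v, A u v = -A v u) :
    IsAlternating (coboundary A) where
  swap_left u v x := by simp only [coboundary]; rw [hA u v]; ring
  swap_right u v x := by simp only [coboundary]; rw [hA x v]; ring

namespace IsAlternating

variable {F : V → V → V → R}

theorem rotate (hF : IsAlternating F) (u v x : V) : F v x u = F u v x := by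
  rw [hF.swap_right v u x, hF.swap_left u v x, neg_neg]

theorem mul_symmetric (hF : IsAlternating F) {w : V → V → V → R}
    (hw₁ : ∀ u v x, w u v x = w v u x) (hw₂ : ∀ u v x, w u v x = w u x v) :
    IsAlternating fun u v x => w u v x * F u v x where
  swap_left u v x := by rw [hF.swap_left u v x, hw₁ u v x, mul_neg]
  swap_right u v x := by rw [hF.swap_right u v x, hw₂ u v x, mul_neg]

variable [Fintype V]

theorem sum_mul_coboundary (hF : IsAlternating F) (B : V → V → R) :
    ∑ u, ∑ v, ∑ x, F u v x * coboundary B u v x = 3 * ∑ u, ∑ v, ∑ x, F u v x * B u v := by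
  have h_first : ∑ u, ∑ v, ∑ x, F u v x * B v x = ∑ u, ∑ v, ∑ x, F u v x * B u v :=
    calc ∑ u, ∑ v, ∑ x, F u v x * B v x = ∑ u, ∑ v, ∑ x, F v x u * B v x := by
          congr! 3 with u _ v _ x _
          rw [hF.rotate u v x]
      _ = ∑ v, ∑ x, ∑ u, F v x u * B v x := by
          rw [Finset.sum_comm]
          exact Finset.sum_congr rfl fun _ _ => Finset.sum_comm
  have h_second : ∑ u, ∑ v, ∑ x, F u v x * B u x = -∑ u, ∑ v, ∑ x, F u v x * B u v :=
    calc ∑ u, ∑ v, ∑ x, F u v x * B u x = ∑ u, ∑ v, ∑ x, F u x v * B u v :=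
          Finset.sum_congr rfl fun _ _ => Finset.sum_comm
      _ = -∑ u, ∑ v, ∑ x, F u v x * B u v := by
          simp only [← Finset.sum_neg_distrib, ← neg_mul]
          congr! 3 with u _ v _ x _
          rw [hF.swap_right]
  simp only [coboundary, mul_add, mul_sub, Finset.sum_add_distrib, Finset.sum_sub_distrib,
    h_first, h_second]
  ring

end IsAlternating

variable [DecidableEq V]

def elemForm (a b u v : V) : R :=
  if u = a ∧ v = b then 1 else if u = b ∧ v = a then -1 else 0

theorem elemForm_eq_sub {a b : V} (hab : a ≠ b) (u v : V) :
    (elemForm a b u v : R) =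
      (if u = a ∧ v = b then 1 else 0) - (if u = b ∧ v = a then 1 else 0) := by
  unfold elemForm
  split_ifs <;> grind

theorem sum_sum_mul_elemForm [Fintype V] {a b : V} (hab : a ≠ b) (G : V → V → R) :
    ∑ u, ∑ v, G u v * elemForm a b u v = G a b - G b a := by
  simp [elemForm_eq_sub hab, mul_sub, ite_and, Finset.sum_sub_distrib]

end Cochains

section Action

variable {V : Type*} [Fintype V]

noncomputable def action (w : V → V → V → ℝ) (A : V → V → ℝ) : ℝ :=
  (1 / 12) * ∑ u, ∑ v, ∑ x, w u v x * coboundary A u v x ^ 2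

theorem hasDerivAt_action_add_mul (w : V → V → V → ℝ) (A B : V → V → ℝ) :
    HasDerivAt (fun ε => action w fun u v => A u v + ε * B u v)
      ((1 / 6) * ∑ u, ∑ v, ∑ x, w u v x * coboundary A u v x * coboundary B u v x) 0 := by
  have h_term : ∀ u v x, HasDerivAt
      (fun ε => w u v x * coboundary (fun u v => A u v + ε * B u v) u v x ^ 2)
      (2 * (w u v x * coboundary A u v x * coboundary B u v x)) 0 := by
    intro u v x
    simp only [coboundary_add_mul]
    refine (((((hasDerivAt_id (0 : ℝ)).mul_const (coboundary B u v x)).const_add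
      (coboundary A u v x)).fun_pow 2).const_mul (w u v x)).congr_deriv ?_
    simp only [id, zero_mul, add_zero, one_mul, Nat.cast_ofNat, Nat.add_one_sub_one, pow_one]
    ring
  have h_sum : HasDerivAt
      (fun ε => ∑ u, ∑ v, ∑ x, w u v x * coboundary (fun u v => A u v + ε * B u v) u v x ^ 2)
      (∑ u, ∑ v, ∑ x, 2 * (w u v x * coboundary A u v x * coboundary B u v x)) 0 :=
    HasDerivAt.fun_sum fun u _ => HasDerivAt.fun_sum fun v _ =>
      HasDerivAt.fun_sum fun x _ => h_term u v x
  refine (h_sum.const_mul (1 / 12 : ℝ)).congr_deriv ?_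
  simp only [← Finset.mul_sum]
  ring

theorem deriv_action_add_mul_elemForm [DecidableEq V] {w : V → V → V → ℝ}
    (hw₁ : ∀ u v x, w u v x = w v u x) (hw₂ : ∀ u v x, w u v x = w u x v)
    {A : V → V → ℝ} (hA : ∀ u v, A u v = -A v u) {a b : V} (hab : a ≠ b) :
    deriv (fun ε => action w fun u v => A u v + ε * elemForm a b u v) 0 =
      ∑ x, w a b x * coboundary A a b x := by
  have hF := (isAlternating_coboundary hA).mul_symmetric hw₁ hw₂
  rw [(hasDerivAt_action_add_mul w A _).deriv, hF.sum_mul_coboundary]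
  simp only [← Finset.sum_mul, sum_sum_mul_elemForm hab, hF.swap_left a b,
    Finset.sum_neg_distrib]
  ring

end Action

/-- Discrete variational characterization of the Maxwell equations: for a
finite vertex set `V`, a weight function `w` invariant under all permutations
of its three arguments, an antisymmetric discrete 1-form `A` with coboundary
`dA(u,v,x) = A(v,x) − A(u,x) + A(u,v)`, and the discrete action
`S(A) = (1/12) ∑_u ∑_v ∑_x w(u,v,x) (dA(u,v,x))²`, the derivative at `ε = 0`
of `ε ↦ S(A + ε η_{ab})` (for distinct `a, b`, with `η_{ab}` the elementary
antisymmetric 1-form) equals `∑_x w(a,b,x) dA(a,b,x)`; consequently `A` is a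
critical point of `S` iff `∑_x w(a,b,x) dA(a,b,x) = 0` for all distinct
`a, b`, i.e. the discrete Maxwell equation `∗d∗dA = 0` holds. -/
theorem discrete_maxwell_variational {V : Type*} [Fintype V] [DecidableEq V]
    (w : V → V → V → ℝ)
    (hw₁ : ∀ u v x : V, w u v x = w v u x)
    (hw₂ : ∀ u v x : V, w u v x = w u x v) :
    let dd : (V → V → ℝ) → V → V → V → ℝ :=
      fun A u v x => A v x - A u x + A u v
    let S : (V → V → ℝ) → ℝ :=
      fun A => (1 / 12) * ∑ u : V, ∑ v : V, ∑ x : V, w u v x * (dd A u v x) ^ 2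
    let η : V → V → V → V → ℝ :=
      fun a b u v =>
        if u = a ∧ v = b then 1 else if u = b ∧ v = a then -1 else 0
    (∀ A : V → V → ℝ, (∀ u v : V, A u v = - A v u) →
        ∀ a b : V, a ≠ b →
          deriv (fun ε : ℝ =>
            S (fun u v => A u v + ε * η a b u v)) 0
            = ∑ x : V, w a b x * dd A a b x) ∧
    (∀ A : V → V → ℝ, (∀ u v : V, A u v = - A v u) →
        ((∀ a b : V, a ≠ b →
            deriv (fun ε : ℝ =>
              S (fun u v => A u v + ε * η a b u v)) 0 = 0)
          ↔ (∀ a b : V, a ≠ b → ∑ x : V, w a b x * dd A a b x = 0))) := by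
  intro dd S η
  have h_deriv : ∀ A : V → V → ℝ, (∀ u v : V, A u v = - A v u) → ∀ a b : V, a ≠ b →
      deriv (fun ε : ℝ => S (fun u v => A u v + ε * η a b u v)) 0
        = ∑ x : V, w a b x * dd A a b x :=
    fun _ hA _ _ hab => deriv_action_add_mul_elemForm hw₁ hw₂ hA hab
  refine ⟨h_deriv, fun A hA => forall₂_congr fun a b => forall_congr' fun hab => ?_⟩
  rw [h_deriv A hA a b hab]
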